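/- arXiv:1504.03980 — 2 statements merged into one kernel-verified Lean document; each statement's English description precedes it below -/
import Mathlib

section
/- For every symplectic Dellac configuration C of size 2n, the blown-up rook arrangement b(C) on a 4n×4n board is symplectic: for all 1 ≤ i ≤ 4n and 1 ≤ j ≤ 2n, cell (i,j) is marked in b(C) iff cell (4n+1−i, 4n+1−j) is marked. -/
/-- A Dellac configuration with `m` rows and `2m` columns. -/
def IsDellac (m : ℕ) (C : Finset (ℕ × ℕ)) : Prop :=
  (∀ p ∈ C, p.1 ∈ Finset.Icc 1 m ∧ p.2 ∈ Finset.Icc 1 (2 * m)) ∧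
  (∀ j ∈ Finset.Icc 1 (2 * m), ∃! i, (i, j) ∈ C) ∧
  (∀ i ∈ Finset.Icc 1 m, (C.filter (fun p => p.1 = i)).card = 2) ∧
  (∀ p ∈ C, p.1 ≤ p.2 ∧ p.2 ≤ m + p.1)

/-- A symplectic Dellac configuration of size `2n`: a Dellac configuration with `2n` rows
and `4n` columns such that `(i,j)` is marked iff `(2n-i+1, 4n-j+1)` is marked, for
`1 ≤ i, j ≤ 2n`. -/
def IsSpDellac (n : ℕ) (C : Finset (ℕ × ℕ)) : Prop :=
  IsDellac (2 * n) C ∧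
  ∀ i ∈ Finset.Icc 1 (2 * n), ∀ j ∈ Finset.Icc 1 (2 * n),
    ((i, j) ∈ C ↔ (2 * n + 1 - i, 4 * n + 1 - j) ∈ C)

/-- The blow map `b`. -/
def blow (C : Finset (ℕ × ℕ)) : Finset (ℕ × ℕ) :=
  C.image (fun p =>
    if (C.filter (fun q => q.1 = p.1 ∧ q.2 < p.2)).Nonempty then (2 * p.1, p.2)
    else (2 * p.1 - 1, p.2))

lemma sp_bounds (n : ℕ) (C : Finset (ℕ × ℕ)) (hC : IsSpDellac n C) :
    ∀ p ∈ C, 1 ≤ p.1 ∧ p.1 ≤ 2 * n ∧ 1 ≤ p.2 ∧ p.2 ≤ 4 * n := by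
  intro p hp
  have := hC.1.1 p hp
  simp only [Finset.mem_Icc] at this
  omega
lemma sp_partner (n : ℕ) (C : Finset (ℕ × ℕ)) (hC : IsSpDellac n C) :
    ∀ r c, (r, c) ∈ C → ∃ c', c' ≠ c ∧ (r, c') ∈ C ∧
      ∀ q ∈ C, q.1 = r → q = (r, c) ∨ q = (r, c') := by
  intro r c hrc
  obtain ⟨hr1, hr2, hc1, hc2⟩ := sp_bounds n C hC (r, c) hrc
  have hcard := hC.1.2.2.1 r (by simp [Finset.mem_Icc]; omega)
  obtain ⟨a, b, hab, hS⟩ := Finset.card_eq_two.mp hcard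
  obtain ⟨a1, a2⟩ := a
  obtain ⟨b1, b2⟩ := b
  have hmem : (r, c) ∈ C.filter (fun p => p.1 = r) := by
    simp [Finset.mem_filter, hrc]
  rw [hS] at hmem
  have ha : (a1, a2) ∈ C.filter (fun p => p.1 = r) := by rw [hS]; simp
  have hb : (b1, b2) ∈ C.filter (fun p => p.1 = r) := by rw [hS]; simp
  simp only [Finset.mem_filter] at ha hb
  have ha1 : a1 = r := ha.2
  have hb1 : b1 = r := hb.2
  subst ha1 hb1
  simp only [Finset.mem_insert, Finset.mem_singleton, Prod.mk.injEq] at hmem hab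
  rcases hmem with ⟨_, h⟩ | ⟨_, h⟩
  · subst h
    refine ⟨b2, by tauto, hb.1, ?_⟩
    intro q hq hq1
    have hq' : q ∈ Finset.filter (fun p => p.1 = q.1) C := Finset.mem_filter.mpr ⟨hq, rfl⟩
    rw [hq1, hS] at hq'
    simpa using hq'
  · subst h
    refine ⟨a2, by tauto, ha.1, ?_⟩
    intro q hq hq1
    have hq' : q ∈ Finset.filter (fun p => p.1 = q.1) C := Finset.mem_filter.mpr ⟨hq, rfl⟩
    rw [hq1, hS] at hq'
    simp at hq'
    tauto
lemma sp_full_sym (n : ℕ) (C : Finset (ℕ × ℕ)) (hC : IsSpDellac n C) :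
    ∀ r c, (r, c) ∈ C → (2 * n + 1 - r, 4 * n + 1 - c) ∈ C := by
  intro r c hrc
  obtain ⟨hr1, hr2, hc1, hc2⟩ := sp_bounds n C hC (r, c) hrc
  by_cases hc : c ≤ 2 * n
  · exact (hC.2 r (by simp [Finset.mem_Icc]; omega) c (by simp [Finset.mem_Icc]; omega)).mp hrc
  · have key := hC.2 (2 * n + 1 - r) (by simp [Finset.mem_Icc]; omega)
      (4 * n + 1 - c) (by simp [Finset.mem_Icc]; omega)
    have e1 : 2 * n + 1 - (2 * n + 1 - r) = r := by omega
    have e2 : 4 * n + 1 - (4 * n + 1 - c) = c := by omega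
    rw [e1, e2] at key
    exact key.mpr hrc
lemma sp_second_iff (n : ℕ) (C : Finset (ℕ × ℕ)) (hC : IsSpDellac n C)
    {r c c' : ℕ} (hrc : (r, c) ∈ C) (hc'C : (r, c') ∈ C)
    (huniq : ∀ q ∈ C, q.1 = r → q = (r, c) ∨ q = (r, c')) :
    (C.filter (fun q => q.1 = r ∧ q.2 < c)).Nonempty ↔ c' < c := by
  constructor
  · rintro ⟨q, hq⟩
    simp only [Finset.mem_filter] at hq
    rcases huniq q hq.1 hq.2.1 with h | h
    · exfalso; have := hq.2.2; rw [h] at this; exact absurd this (by simp)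
    · have := hq.2.2; rw [h] at this; exact this
  · intro h
    exact ⟨(r, c'), by simp [Finset.mem_filter, hc'C, h]⟩
lemma sp_flip (n : ℕ) (C : Finset (ℕ × ℕ)) (hC : IsSpDellac n C) :
    ∀ r c, (r, c) ∈ C →
      ((C.filter (fun q => q.1 = r ∧ q.2 < c)).Nonempty ↔
        ¬ (C.filter (fun q => q.1 = 2 * n + 1 - r ∧ q.2 < 4 * n + 1 - c)).Nonempty) := by
  intro r c hrc
  obtain ⟨hr1, hr2, hc1, hc2⟩ := sp_bounds n C hC (r, c) hrc
  obtain ⟨c', hne, hc'C, huniq⟩ := sp_partner n C hC r c hrc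
  obtain ⟨_, _, hc'1, hc'2⟩ := sp_bounds n C hC (r, c') hc'C
  have h1 : (2 * n + 1 - r, 4 * n + 1 - c) ∈ C := sp_full_sym n C hC r c hrc
  have h2 : (2 * n + 1 - r, 4 * n + 1 - c') ∈ C := sp_full_sym n C hC r c' hc'C
  obtain ⟨d, hdne, hdC, hduniq⟩ := sp_partner n C hC (2 * n + 1 - r) (4 * n + 1 - c) h1
  have hd : d = 4 * n + 1 - c' := by
    rcases hduniq (2 * n + 1 - r, 4 * n + 1 - c') h2 rfl with h | h <;>
      simp only [Prod.mk.injEq] at h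
    · omega
    · omega
  subst hd
  rw [sp_second_iff n C hC hrc hc'C huniq,
    sp_second_iff n C hC (c' := 4 * n + 1 - c') h1 h2 hduniq]
  omega
lemma blow_sym (n : ℕ) (C : Finset (ℕ × ℕ)) (hC : IsSpDellac n C) :
    ∀ i j, (i, j) ∈ blow C → (4 * n + 1 - i, 4 * n + 1 - j) ∈ blow C := by
  intro i j hij
  rw [blow, Finset.mem_image] at hij
  obtain ⟨p, hpC, hfp⟩ := hij
  obtain ⟨r, c⟩ := p
  obtain ⟨hr1, hr2, hc1, hc2⟩ := sp_bounds n C hC (r, c) hpC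
  simp only at hr1 hr2 hc1 hc2
  have hsym : (2 * n + 1 - r, 4 * n + 1 - c) ∈ C := sp_full_sym n C hC r c hpC
  split_ifs at hfp with h
  · obtain ⟨hi, hj⟩ : 2 * r = i ∧ c = j := Prod.mk.injEq .. ▸ hfp
    have hns : ¬ (C.filter (fun q => q.1 = 2 * n + 1 - r ∧ q.2 < 4 * n + 1 - c)).Nonempty :=
      (sp_flip n C hC r c hpC).mp h
    rw [blow, Finset.mem_image]
    refine ⟨(2 * n + 1 - r, 4 * n + 1 - c), hsym, ?_⟩
    rw [if_neg hns]
    have : 2 * (2 * n + 1 - r) - 1 = 4 * n + 1 - i := by omega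
    rw [this]
    have : 4 * n + 1 - c = 4 * n + 1 - j := by omega
    rw [this]
  · obtain ⟨hi, hj⟩ : 2 * r - 1 = i ∧ c = j := Prod.mk.injEq .. ▸ hfp
    have hns : (C.filter (fun q => q.1 = 2 * n + 1 - r ∧ q.2 < 4 * n + 1 - c)).Nonempty := by
      by_contra hcon
      exact h ((sp_flip n C hC r c hpC).mpr hcon)
    rw [blow, Finset.mem_image]
    refine ⟨(2 * n + 1 - r, 4 * n + 1 - c), hsym, ?_⟩
    rw [if_pos hns]
    have : 2 * (2 * n + 1 - r) = 4 * n + 1 - i := by omega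
    rw [this]
    have : 4 * n + 1 - c = 4 * n + 1 - j := by omega
    rw [this]

/-- For a symplectic Dellac configuration `C`, the blown-up rook arrangement `b(C)` is
symplectic. -/
theorem stmt13 (n : ℕ) (C : Finset (ℕ × ℕ)) (hC : IsSpDellac n C) :
    ∀ i ∈ Finset.Icc 1 (4 * n), ∀ j ∈ Finset.Icc 1 (2 * n),
      ((i, j) ∈ blow C ↔ (4 * n + 1 - i, 4 * n + 1 - j) ∈ blow C) := by
  intro i hi j hj
  simp only [Finset.mem_Icc] at hi hj
  constructor
  · exact blow_sym n C hC i j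
  · intro h
    have := blow_sym n C hC _ _ h
    have e1 : 4 * n + 1 - (4 * n + 1 - i) = i := by omega
    have e2 : 4 * n + 1 - (4 * n + 1 - j) = j := by omega
    rwa [e1, e2] at this
end

section
/- The melt map sends symplectic rook arrangements on a 4n×4n board (whose marks satisfy the Dellac bounds ⌈r/2⌉ ≤ c ≤ 2n + ⌈r/2⌉) to symplectic Dellac configurations: the merged board satisfies the central symmetry condition that (i,j) is marked iff (2n−i+1, 4n−j+1) is marked. -/
/-- A rook arrangement on an `m × m` board (1-based indices). -/
def IsRook (m : ℕ) (R : Finset (ℕ × ℕ)) : Prop :=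
  (∀ p ∈ R, p.1 ∈ Finset.Icc 1 m ∧ p.2 ∈ Finset.Icc 1 m) ∧
  (∀ i ∈ Finset.Icc 1 m, ∃! j, (i, j) ∈ R) ∧
  (∀ j ∈ Finset.Icc 1 m, ∃! i, (i, j) ∈ R)

/-- A symplectic rook arrangement on the `4n × 4n` board. -/
def IsSpRook (n : ℕ) (R : Finset (ℕ × ℕ)) : Prop :=
  IsRook (4 * n) R ∧
  ∀ i ∈ Finset.Icc 1 (4 * n), ∀ j ∈ Finset.Icc 1 (2 * n),
    ((i, j) ∈ R ↔ (4 * n + 1 - i, 4 * n + 1 - j) ∈ R)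

/-- The melt map. -/
def melt (R : Finset (ℕ × ℕ)) : Finset (ℕ × ℕ) :=
  R.image (fun p => ((p.1 + 1) / 2, p.2))

lemma mem_melt (R : Finset (ℕ × ℕ)) (i j : ℕ) :
    (i, j) ∈ melt R ↔ ∃ a, (a, j) ∈ R ∧ (a + 1) / 2 = i := by
  simp only [melt, Finset.mem_image, Prod.ext_iff]
  constructor
  · rintro ⟨⟨a, b⟩, hab, h1, h2⟩
    subst h2
    exact ⟨a, hab, h1⟩
  · rintro ⟨a, ha, h1⟩; exact ⟨(a, j), ha, h1, rfl⟩

/-- The melt map sends symplectic rook arrangements satisfying the Dellac bounds to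
symplectic Dellac configurations; in particular the merged board satisfies the central
symmetry condition. -/
theorem stmt14 (n : ℕ) (R : Finset (ℕ × ℕ)) (hR : IsSpRook n R)
    (hbd : ∀ p ∈ R, (p.1 + 1) / 2 ≤ p.2 ∧ p.2 ≤ 2 * n + (p.1 + 1) / 2) :
    IsSpDellac n (melt R) := by
  obtain ⟨⟨hbox, hrow, hcol⟩, hsym⟩ := hR
  have key : ∀ i j : ℕ, 1 ≤ i →
      ((i, j) ∈ melt R ↔ (2 * i - 1, j) ∈ R ∨ (2 * i, j) ∈ R) := by
    intro i j hi
    rw [mem_melt]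
    constructor
    · rintro ⟨a, ha, h1⟩
      have ha1 := (hbox _ ha).1
      rw [Finset.mem_Icc] at ha1
      have : a = 2 * i - 1 ∨ a = 2 * i := by omega
      rcases this with h | h <;> [left; right] <;> rwa [← h]
    · rintro (h | h)
      · exact ⟨2 * i - 1, h, by omega⟩
      · exact ⟨2 * i, h, by omega⟩
  constructor
  · refine ⟨?_, ?_, ?_, ?_⟩
    · rintro ⟨x, y⟩ hp
      simp only [melt, Finset.mem_image] at hp
      obtain ⟨q, hq, hqe⟩ := hp
      obtain ⟨h1, h2⟩ := hbox q hq
      rw [Finset.mem_Icc] at h1 h2 ⊢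
      rw [Finset.mem_Icc]
      obtain ⟨rfl, rfl⟩ := Prod.mk.injEq .. ▸ hqe
      constructor <;> omega
    · intro j hj
      rw [Finset.mem_Icc] at hj
      obtain ⟨i0, hi0, hu⟩ := hcol j (by rw [Finset.mem_Icc]; omega)
      refine ⟨(i0 + 1) / 2, ?_, ?_⟩
      · exact (mem_melt R _ j).2 ⟨i0, hi0, rfl⟩
      · intro y hy
        obtain ⟨a, ha, h1⟩ := (mem_melt R y j).1 hy
        rw [← h1, hu a ha]
    · intro i hi
      rw [Finset.mem_Icc] at hi
      obtain ⟨j1, hj1, hj1u⟩ := hrow (2 * i - 1) (by rw [Finset.mem_Icc]; omega)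
      obtain ⟨j2, hj2, hj2u⟩ := hrow (2 * i) (by rw [Finset.mem_Icc]; omega)
      have hne : j1 ≠ j2 := by
        intro h
        subst h
        have hj1c := (hbox _ hj1).2
        rw [Finset.mem_Icc] at hj1c
        obtain ⟨i0, _, hu⟩ := hcol j1 (by rw [Finset.mem_Icc]; omega)
        have e1 := hu _ hj1
        have e2 := hu _ hj2
        omega
      have hset : (melt R).filter (fun p => p.1 = i) = {(i, j1), (i, j2)} := by
        ext ⟨x, y⟩
        simp only [Finset.mem_filter, Finset.mem_insert, Finset.mem_singleton,
          Prod.mk.injEq]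
        constructor
        · rintro ⟨hm, rfl⟩
          rcases (key x y (by omega)).1 hm with h | h
          · exact Or.inl ⟨rfl, (hj1u y (by rwa [show 2 * x - 1 = 2 * x - 1 from rfl])).symm ▸ rfl⟩
          · exact Or.inr ⟨rfl, hj2u y h⟩
        · rintro (⟨hx, hy⟩ | ⟨hx, hy⟩) <;> refine ⟨?_, hx⟩ <;> rw [hx, hy]
          · exact (key i j1 (by omega)).2 (Or.inl hj1)
          · exact (key i j2 (by omega)).2 (Or.inr hj2)
      rw [hset, Finset.card_pair (by simp [hne])]
    · rintro ⟨x, y⟩ hp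
      simp only [melt, Finset.mem_image] at hp
      obtain ⟨q, hq, hqe⟩ := hp
      have := hbd q hq
      obtain ⟨rfl, rfl⟩ := Prod.mk.injEq .. ▸ hqe
      exact this
  · intro i hi j hj
    rw [Finset.mem_Icc] at hi hj
    have h1 : (2 * i - 1, j) ∈ R ↔ (4 * n + 2 - 2 * i, 4 * n + 1 - j) ∈ R := by
      have := hsym (2 * i - 1) (by rw [Finset.mem_Icc]; omega) j
        (by rw [Finset.mem_Icc]; omega)
      have e : 4 * n + 1 - (2 * i - 1) = 4 * n + 2 - 2 * i := by omega
      rwa [e] at this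
    have h2 : (2 * i, j) ∈ R ↔ (4 * n + 1 - 2 * i, 4 * n + 1 - j) ∈ R := by
      exact hsym (2 * i) (by rw [Finset.mem_Icc]; omega) j
        (by rw [Finset.mem_Icc]; omega)
    rw [key i j (by omega), key (2 * n + 1 - i) (4 * n + 1 - j) (by omega)]
    have e1 : 2 * (2 * n + 1 - i) - 1 = 4 * n + 1 - 2 * i := by omega
    have e2 : 2 * (2 * n + 1 - i) = 4 * n + 2 - 2 * i := by omega
    rw [e1, e2]
    tauto
end
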